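/- Let K be a compact metric space, X a Banach space, and T : X → C(K) a bounded linear operator into the space of real-valued continuous functions on K with the supremum norm. Assume there is a sequence (x_n)_{n∈ℕ} in X with ‖x_n‖ = 1 for all n such that (T(x_n))_n converges pointwise on K to a function H : K → ℝ, and assume there exist h > 0, a point t_0 ∈ K, and sequences (s_n), (s'_n) in K both converging to t_0 with limsup_{n→∞} |H(s_n) − H(s'_n)| ≥ h. Then for every weakly compact bounded linear operator S : X → C(K), ‖T − S‖ ≥ h/2; in particular ‖T‖_{e,w} ≥ h/2 and ‖T‖_e ≥ h/2. -/

import Mathlib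

/-!
If `S` is weakly compact, the bounded sequence `S xₙ` has a weak cluster point `g ∈ C(K)`, and
evaluation at a point is weak-continuous, so `g t` is a cluster value of `S xₙ t` for every `t`.
Since `|T xₙ t - S xₙ t| ≤ ‖T - S‖` and `T xₙ t → H t`, this gives `|H - g| ≤ ‖T - S‖` pointwise.
As `g` is continuous at `t₀`, the jump of `H` along `s, s' → t₀` is at most `2 ‖T - S‖`.
Compact operators are weakly compact, which gives the second bound.
-/

open Filter Topology

/-- A bounded linear operator between normed spaces is weakly compact if the closure,
in the weak topology of the codomain, of the image of the closed unit ball is compact. -/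
def IsWeaklyCompactOperator {X Y : Type*} [NormedAddCommGroup X] [NormedSpace ℝ X]
    [NormedAddCommGroup Y] [NormedSpace ℝ Y] (S : X →L[ℝ] Y) : Prop :=
  IsCompact (closure ((toWeakSpace ℝ Y) '' (⇑S '' Metric.closedBall 0 1)))

section WeaklyCompact

variable {X Y : Type*} [NormedAddCommGroup X] [NormedSpace ℝ X]
  [NormedAddCommGroup Y] [NormedSpace ℝ Y]

theorem IsCompactOperator.isWeaklyCompactOperator {S : X →L[ℝ] Y}
    (hS : IsCompactOperator S) : IsWeaklyCompactOperator S := by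
  have hcpt : IsCompact (closure (S '' Metric.closedBall 0 1)) :=
    hS.isCompact_closure_image_of_isVonNBounded (NormedSpace.isVonNBounded_closedBall ℝ X 1)
  exact (hcpt.image (toWeakSpaceCLM ℝ Y).continuous).closure_of_subset
    (Set.image_mono subset_closure)

theorem IsWeaklyCompactOperator.exists_forall_mapClusterPt {S : X →L[ℝ] Y}
    (hS : IsWeaklyCompactOperator S) {u : ℕ → X} (hu : ∀ n, ‖u n‖ ≤ 1) :
    ∃ y : Y, ∀ φ : StrongDual ℝ Y, MapClusterPt (φ y) atTop (fun n => φ (S (u n))) := by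
  have hmem : map (fun n => toWeakSpace ℝ Y (S (u n))) atTop ≤
      𝓟 (closure (toWeakSpace ℝ Y '' (S '' Metric.closedBall 0 1))) :=
    le_principal_iff.mpr <| mem_map.mpr <| Eventually.of_forall fun n =>
      subset_closure ⟨S (u n), ⟨u n, mem_closedBall_zero_iff.mpr (hu n), rfl⟩, rfl⟩
  obtain ⟨y, -, hy⟩ := hS.exists_mapClusterPt hmem
  refine ⟨y, fun φ => ?_⟩
  exact hy.continuousAt_comp (WeakBilin.eval_continuous (topDualPairing ℝ Y).flip φ).continuousAt

end WeaklyCompact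

theorem abs_sub_le_of_tendsto_of_mapClusterPt {a b : ℕ → ℝ} {a₀ b₀ C : ℝ}
    (ha : Tendsto a atTop (𝓝 a₀)) (hb : MapClusterPt b₀ atTop b)
    (hab : ∀ n, |a n - b n| ≤ C) : |a₀ - b₀| ≤ C := by
  obtain ⟨ψ, hψ, hbψ⟩ := hb.tendsto_subseq
  exact le_of_tendsto' ((ha.comp hψ.tendsto_atTop).sub hbψ).abs fun n => hab (ψ n)

theorem limsup_abs_sub_le_of_abs_sub_le_of_continuousAt {K : Type*} [TopologicalSpace K]
    {H g : K → ℝ} {C : ℝ} {t₀ : K} {s s' : ℕ → K} (hHg : ∀ t, |H t - g t| ≤ C)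
    (hg : ContinuousAt g t₀) (hs : Tendsto s atTop (𝓝 t₀)) (hs' : Tendsto s' atTop (𝓝 t₀)) :
    limsup (fun n => |H (s n) - H (s' n)|) atTop ≤ 2 * C := by
  have hgap : Tendsto (fun n => |g (s n) - g (s' n)| + 2 * C) atTop (𝓝 (2 * C)) := by
    simpa using (((hg.tendsto.comp hs).sub (hg.tendsto.comp hs')).abs).add_const (2 * C)
  have hle : ∀ n, |H (s n) - H (s' n)| ≤ |g (s n) - g (s' n)| + 2 * C := fun n => by
    have h₁ := hHg (s n)
    have h₂ := hHg (s' n)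
    have h₃ := abs_sub_le (H (s n)) (g (s n)) (H (s' n))
    have h₄ := abs_sub_le (g (s n)) (g (s' n)) (H (s' n))
    rw [abs_sub_comm (g (s' n))] at h₄
    linarith
  calc limsup (fun n => |H (s n) - H (s' n)|) atTop
      ≤ limsup (fun n => |g (s n) - g (s' n)| + 2 * C) atTop :=
        limsup_le_limsup (Eventually.of_forall hle)
          (isCoboundedUnder_le_of_le atTop fun n => abs_nonneg _) hgap.isBoundedUnder_le
    _ = 2 * C := hgap.limsup_eq

theorem abs_apply_sub_apply_le_opNorm_sub {X K : Type*} [NormedAddCommGroup X]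
    [NormedSpace ℝ X] [TopologicalSpace K] [CompactSpace K] (T S : X →L[ℝ] C(K, ℝ))
    {x : X} (hx : ‖x‖ ≤ 1) (t : K) : |T x t - S x t| ≤ ‖T - S‖ :=
  calc |T x t - S x t| = ‖(T - S) x t‖ := rfl
    _ ≤ ‖(T - S) x‖ := ((T - S) x).norm_coe_le_norm t
    _ ≤ ‖T - S‖ := (T - S).unit_le_opNorm x hx

theorem essentialNorm_lower_bound_of_pointwise_limit_discontinuity
    {X K : Type*} [NormedAddCommGroup X] [NormedSpace ℝ X]
    [MetricSpace K] [CompactSpace K]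
    (T : X →L[ℝ] C(K, ℝ)) (x : ℕ → X) (hx : ∀ n, ‖x n‖ = 1)
    (H : K → ℝ)
    (hconv : ∀ t : K, Tendsto (fun n => T (x n) t) atTop (𝓝 (H t)))
    (h : ℝ) (t₀ : K) (s s' : ℕ → K)
    (hs : Tendsto s atTop (𝓝 t₀)) (hs' : Tendsto s' atTop (𝓝 t₀))
    (hjump : h ≤ limsup (fun n => |H (s n) - H (s' n)|) atTop) :
    (∀ S : X →L[ℝ] C(K, ℝ), IsWeaklyCompactOperator S → h / 2 ≤ ‖T - S‖) ∧
    (∀ S : X →L[ℝ] C(K, ℝ), IsCompactOperator ⇑S → h / 2 ≤ ‖T - S‖) := by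
  have hweak : ∀ S : X →L[ℝ] C(K, ℝ), IsWeaklyCompactOperator S → h / 2 ≤ ‖T - S‖ := by
    intro S hS
    obtain ⟨g, hg⟩ := hS.exists_forall_mapClusterPt fun n => (hx n).le
    have hHg : ∀ t, |H t - g t| ≤ ‖T - S‖ := fun t =>
      abs_sub_le_of_tendsto_of_mapClusterPt (hconv t) (hg (ContinuousMap.evalCLM ℝ t))
        fun n => abs_apply_sub_apply_le_opNorm_sub T S (hx n).le t
    have := limsup_abs_sub_le_of_abs_sub_le_of_continuousAt hHg g.continuous.continuousAt hs hs'
    linarith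
  exact ⟨hweak, fun S hS => hweak S hS.isWeaklyCompactOperator⟩
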